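/- An r×n ρ-latin rectangle L on symbols [k] can be completed to an n×n ρ-latin square if and only if ρ_ℓ − e_ℓ ≤ n − r for all ℓ ∈ [k] and, for every subset K ⊆ [k] of symbols, Σ_{ℓ∈K}(ρ_ℓ − e_ℓ) ≤ Σ_{j=1}^{n} min{n − r, μ_K(j)}, where μ_K(j) is the number of symbols in K missing in column j. -/

import Mathlib

/-!
A completion of `L` is `L` stacked on a bottom block `B` with `n - r` rows. Necessity is
counting in `B`: a symbol occurs at most once in each of its `n - r` rows, and the entries of
column `j` of `B` that lie in `K` are distinct symbols of `K` missing from column `j` of `L`.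

For sufficiency, first choose for every column `j` a set of `n - r` symbols missing from column
`j` of `L`, symbol `ℓ` being chosen in exactly `ρ_ℓ - e_ℓ` columns. This is a flow problem
whose cut conditions are exactly the stated inequalities, and augmenting paths solve it. The
chosen (column, symbol) pairs form a bipartite graph of maximum degree `n - r`; padded to a
regular multigraph it splits into perfect matchings by Hall's theorem (König's edge-colouring
theorem), and the matchings are the rows of `B`.
-/

open Finset

/-- `L` is a (partial) latin array: each symbol occurs at most once in each
row and at most once in each column. -/
def latinArr {r s k : ℕ} (L : Fin r → Fin s → Fin k) : Prop :=
  (∀ i, Function.Injective (L i)) ∧ (∀ j, Function.Injective (fun i => L i j))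

/-- Number of occurrences of symbol `ℓ` in `L`. -/
def symCount {r s k : ℕ} (L : Fin r → Fin s → Fin k) (ℓ : Fin k) : ℕ :=
  ((univ : Finset (Fin r × Fin s)).filter (fun p => L p.1 p.2 = ℓ)).card

/-- `μ_I(ℓ)`: number of rows in `I` in which symbol `ℓ` is missing. -/
def muRows {r s k : ℕ} (L : Fin r → Fin s → Fin k) (I : Finset (Fin r)) (ℓ : Fin k) : ℕ :=
  (I.filter (fun i => ∀ j, L i j ≠ ℓ)).card

/-- `μ_J(ℓ)`: number of columns in `J` in which symbol `ℓ` is missing. -/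
def muCols {r s k : ℕ} (L : Fin r → Fin s → Fin k) (J : Finset (Fin s)) (ℓ : Fin k) : ℕ :=
  (J.filter (fun j => ∀ i, L i j ≠ ℓ)).card

/-- `μ_K(i)` for a row `i`: number of symbols of `K` missing in row `i`. -/
def muSymRow {r s k : ℕ} (L : Fin r → Fin s → Fin k) (K : Finset (Fin k)) (i : Fin r) : ℕ :=
  (K.filter (fun ℓ => ∀ j, L i j ≠ ℓ)).card

/-- `μ_K(j)` for a column `j`: number of symbols of `K` missing in column `j`. -/
def muSymCol {r s k : ℕ} (L : Fin r → Fin s → Fin k) (K : Finset (Fin k)) (j : Fin s) : ℕ :=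
  (K.filter (fun ℓ => ∀ i, L i j ≠ ℓ)).card

/-- `S` is an `n × n` `ρ`-latin square. -/
def rhoLatinSquare {n k : ℕ} (ρ : Fin k → ℕ) (S : Fin n → Fin n → Fin k) : Prop :=
  latinArr S ∧ ∀ ℓ, symCount S ℓ = ρ ℓ

/-- `S` extends `L` on the top-left `r × s` corner. -/
def extends' {r s n k : ℕ} (hr : r ≤ n) (hs : s ≤ n)
    (L : Fin r → Fin s → Fin k) (S : Fin n → Fin n → Fin k) : Prop :=
  ∀ i j, S (Fin.castLE hr i) (Fin.castLE hs j) = L i j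


open Relation

theorem Relation.ReflTransGen.exists_first_hit {α : Type*} {r : α → α → Prop} {p : α → Prop}
    {a b : α} (h : ReflTransGen r a b) (hb : p b) :
    p a ∨ ∃ c d, ReflTransGen (fun x y => r x y ∧ ¬p x ∧ ¬p y) a c ∧ ¬p c ∧ r c d ∧ p d := by
  induction h using ReflTransGen.head_induction_on with
  | refl => exact Or.inl hb
  | @head a c hac _ ih =>
    by_cases ha : p a
    · exact Or.inl ha
    by_cases hc : p c
    · exact Or.inr ⟨a, c, .refl, ha, hac, hc⟩
    obtain hc' | ⟨c', d, hpath, hc', hcd, hd⟩ := ih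
    · exact absurd hc' hc
    · exact Or.inr ⟨c', d, hpath.head ⟨hac, ha, hc⟩, hc', hcd, hd⟩

namespace Finset

variable {α β : Type*}

def leftDeg [DecidableEq α] (E : Finset (α × β)) (x : α) : ℕ := #(E.filter fun p => p.1 = x)

def rightDeg [DecidableEq β] (E : Finset (α × β)) (y : β) : ℕ := #(E.filter fun p => p.2 = y)

theorem sum_leftDeg [Fintype α] [DecidableEq α] (E : Finset (α × β)) : ∑ x, E.leftDeg x = #E :=
  (card_eq_sum_card_fiberwise fun p _ => mem_univ p.1).symm

theorem sum_rightDeg [Fintype β] [DecidableEq β] (E : Finset (α × β)) : ∑ y, E.rightDeg y = #E :=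
  (card_eq_sum_card_fiberwise fun p _ => mem_univ p.2).symm

theorem card_filter_insert_of_notMem {γ : Type*} [DecidableEq γ] {s : Finset γ} {q : γ}
    (hq : q ∉ s) (P : γ → Prop) [DecidablePred P] :
    #((insert q s).filter P) = #(s.filter P) + if P q then 1 else 0 := by
  rw [filter_insert]
  split_ifs
  · exact card_insert_of_notMem fun h => hq (mem_filter.1 h).1
  · rfl

theorem leftDeg_insert [DecidableEq α] [DecidableEq β] {E : Finset (α × β)} {x : α} {y : β}
    (hxy : (x, y) ∉ E) (z : α) :
    (insert (x, y) E).leftDeg z = E.leftDeg z + if x = z then 1 else 0 :=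
  card_filter_insert_of_notMem hxy _

theorem rightDeg_insert [DecidableEq α] [DecidableEq β] {E : Finset (α × β)} {x : α} {y : β}
    (hxy : (x, y) ∉ E) (z : β) :
    (insert (x, y) E).rightDeg z = E.rightDeg z + if y = z then 1 else 0 :=
  card_filter_insert_of_notMem hxy _

theorem leftDeg_erase [DecidableEq α] [DecidableEq β] {E : Finset (α × β)} {x : α} {y : β}
    (hxy : (x, y) ∈ E) (z : α) :
    (E.erase (x, y)).leftDeg z + (if x = z then 1 else 0) = E.leftDeg z := by
  rw [← leftDeg_insert (notMem_erase _ E), insert_erase hxy]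

theorem rightDeg_erase [DecidableEq α] [DecidableEq β] {E : Finset (α × β)} {x : α} {y : β}
    (hxy : (x, y) ∈ E) (z : β) :
    (E.erase (x, y)).rightDeg z + (if y = z then 1 else 0) = E.rightDeg z := by
  rw [← rightDeg_insert (notMem_erase _ E), insert_erase hxy]

theorem rightDeg_eq_sum [Fintype α] [DecidableEq α] [DecidableEq β]
    (E : Finset (α × β)) (y : β) : E.rightDeg y = ∑ x, if (x, y) ∈ E then 1 else 0 := by
  rw [sum_boole, Nat.cast_id]
  refine card_nbij' Prod.fst (fun x => (x, y)) (fun p hp => ?_) (fun x hx => by simpa using hx)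
    (fun p hp => Prod.ext rfl (mem_filter.1 hp).2.symm) fun _ _ => rfl
  obtain ⟨hp, rfl⟩ := mem_filter.1 hp
  simpa using hp

theorem leftDeg_eq_sum [Fintype β] [DecidableEq α] [DecidableEq β]
    (E : Finset (α × β)) (x : α) : E.leftDeg x = ∑ y, if (x, y) ∈ E then 1 else 0 := by
  rw [sum_boole, Nat.cast_id]
  refine card_nbij' Prod.snd (fun y => (x, y)) (fun p hp => ?_) (fun y hy => by simpa using hy)
    (fun p hp => Prod.ext (mem_filter.1 hp).2.symm rfl) fun _ _ => rfl
  obtain ⟨hp, rfl⟩ := mem_filter.1 hp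
  simpa using hp

end Finset

section Selection

variable {α β : Type*} (G : α → β → Prop) (a : α → ℕ) (m : ℕ)

def CanShift (E : Finset (α × β)) (y y' : β) : Prop :=
  ∃ x, G x y ∧ (x, y) ∉ E ∧ (x, y') ∈ E

def HasFreeSymbol [DecidableEq α] (E : Finset (α × β)) (y : β) : Prop :=
  ∃ x, G x y ∧ (x, y) ∉ E ∧ E.leftDeg x < a x

variable [DecidableEq α] [DecidableEq β]

def IsPartialSelection (E : Finset (α × β)) : Prop :=
  (∀ p ∈ E, G p.1 p.2) ∧ (∀ x, E.leftDeg x ≤ a x) ∧ ∀ y, E.rightDeg y ≤ m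

variable {G a m}

theorem IsPartialSelection.insert_free {E : Finset (α × β)} (hE : IsPartialSelection G a m E)
    {y : β} (hy : E.rightDeg y < m) (hfree : HasFreeSymbol G a E y) :
    ∃ E', IsPartialSelection G a m E' ∧ #E' = #E + 1 := by
  obtain ⟨x, hG, hxy, hx⟩ := hfree
  refine ⟨insert (x, y) E, ⟨?_, fun x' => ?_, fun y' => ?_⟩, card_insert_of_notMem hxy⟩
  · simpa [forall_and, hG] using hE.1
  · rw [leftDeg_insert hxy]
    have := hE.2.1 x'
    split_ifs with h
    · subst h; omega
    · omega
  · rw [rightDeg_insert hxy]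
    have := hE.2.2 y'
    split_ifs with h
    · subst h; omega
    · omega

/-- Moving `x'` out of column `y` and putting the free symbol `x` there instead frees `x'`,
which can then enter column `y'`. -/
theorem IsPartialSelection.shift {E : Finset (α × β)} (hE : IsPartialSelection G a m E)
    {y' y : β} (hshift : CanShift G E y' y) (hfree : HasFreeSymbol G a E y) :
    ∃ E', IsPartialSelection G a m E' ∧ #E' = #E ∧ (∀ z, E'.rightDeg z = E.rightDeg z) ∧
      HasFreeSymbol G a E' y' ∧ ∀ p : α × β, p.2 ≠ y → (p ∈ E' ↔ p ∈ E) := by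
  obtain ⟨x', hG', hx'y', hx'y⟩ := hshift
  obtain ⟨x, hG, hxy, hx⟩ := hfree
  have hyy' : y' ≠ y := by rintro rfl; exact hx'y' hx'y
  have hxx' : x ≠ x' := by rintro rfl; exact hxy hx'y
  have hnew : (x, y) ∉ E.erase (x', y) := fun h => hxy (mem_of_mem_erase h)
  have hleft : ∀ z, (insert (x, y) (E.erase (x', y))).leftDeg z + (if x' = z then 1 else 0) =
      E.leftDeg z + if x = z then 1 else 0 := fun z => by
    rw [leftDeg_insert hnew, ← leftDeg_erase hx'y z]; omega
  have hright : ∀ z, (insert (x, y) (E.erase (x', y))).rightDeg z = E.rightDeg z := fun z => by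
    rw [rightDeg_insert hnew, ← rightDeg_erase hx'y z]
  refine ⟨insert (x, y) (E.erase (x', y)), ⟨?_, fun z => ?_, fun z => ?_⟩, ?_, hright, ?_, ?_⟩
  · intro p hp
    obtain rfl | hp := mem_insert.1 hp
    exacts [hG, hE.1 p (mem_of_mem_erase hp)]
  · have h := hleft z
    have := hE.2.1 z
    by_cases hz : x = z
    · subst hz; simp only [if_pos, if_neg hxx'.symm] at h; omega
    · split_ifs at h <;> omega
  · rw [hright]; exact hE.2.2 z
  · rw [card_insert_of_notMem hnew, card_erase_of_mem hx'y]
    have := card_pos.2 ⟨_, hx'y⟩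
    omega
  · refine ⟨x', hG', ?_, ?_⟩
    · simp [hx'y', hyy']
    · have h := hleft x'
      have := hE.2.1 x'
      simp only [if_pos, if_neg hxx'] at h
      omega
  · intro p hp
    simp [hp, Prod.ext_iff]

/-- Induction on the set `U` of columns the path may still enter: the path is cut at its first
column with a free symbol, so the shift there leaves the rest of the path intact. -/
theorem IsPartialSelection.exists_card_succ_of_reachable {y₀ : β} (U : Finset β) :
    ∀ {E : Finset (α × β)} {y : β}, IsPartialSelection G a m E → E.rightDeg y₀ < m →
      ReflTransGen (fun z z' => CanShift G E z z' ∧ z' ∈ U) y₀ y → HasFreeSymbol G a E y →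
      ∃ E', IsPartialSelection G a m E' ∧ #E' = #E + 1 := by
  induction U using Finset.strongInduction with
  | H U ih =>
  intro E y hE hy₀ hpath hfree
  obtain h₀ | ⟨c, d, hcpath, hc, ⟨hcd, hdU⟩, hd⟩ := hpath.exists_first_hit hfree
  · exact hE.insert_free hy₀ h₀
  obtain ⟨E', hE', hcard, hdeg, hc', hagree⟩ := hE.shift hcd hd
  have hpath' : ReflTransGen (fun z z' => CanShift G E' z z' ∧ z' ∈ U.erase d) y₀ c := by
    refine hcpath.lift id fun z z' ⟨⟨⟨x, hG, hxz, hxz'⟩, hz'U⟩, hz, hz'⟩ => ?_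
    have hzd : z ≠ d := by rintro rfl; exact hz hd
    have hz'd : z' ≠ d := by rintro rfl; exact hz' hd
    exact ⟨⟨x, hG, by rwa [hagree _ hzd], by rwa [hagree _ hz'd]⟩, mem_erase.2 ⟨hz'd, hz'U⟩⟩
  obtain ⟨E'', hE'', hcard'⟩ := ih _ (erase_ssubset hdU) hE' (by rwa [hdeg]) hpath' hc'
  exact ⟨E'', hE'', hcard'.trans (congrArg (· + 1) hcard)⟩

theorem card_compl_filter_add_card_le_rightDeg [Fintype α] [DecidableRel G]
    {E : Finset (α × β)} {Y : Finset α} {y : β} (h : ∀ x ∉ Y, G x y → (x, y) ∈ E) :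
    #(Yᶜ.filter (G · y)) + #((E.filter (·.1 ∈ Y)).filter (·.2 = y)) ≤ E.rightDeg y := by
  have hK : #(Yᶜ.filter (G · y)) ≤ #((E.filter (·.2 = y)).filter (·.1 ∉ Y)) := by
    refine card_le_card_of_injOn (fun x => (x, y)) (fun x hx => ?_) fun _ _ _ _ h => ?_
    · obtain ⟨hxY, hG⟩ := mem_filter.1 hx
      exact mem_filter.2 ⟨mem_filter.2 ⟨h x (mem_compl.1 hxY) hG, rfl⟩, mem_compl.1 hxY⟩
    · exact congrArg Prod.fst h
  have hsplit := card_filter_add_card_filter_not (s := E.filter (·.2 = y)) (·.1 ∈ Y)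
  rw [filter_comm] at hsplit
  rw [rightDeg]
  omega

/-- The symbols free somewhere in `Z` are saturated and used only inside `Z`, so the remaining
symbols `K` fill the columns of `Z`; a deficient column in `Z` then violates the cut condition
for `K`. -/
theorem IsPartialSelection.exists_cut_lt [Fintype α] [Fintype β] [DecidableRel G]
    {E : Finset (α × β)} (hE : IsPartialSelection G a m E) (hsum : ∑ x, a x = Fintype.card β * m)
    {Z : Finset β} {y₀ : β} (hy₀Z : y₀ ∈ Z) (hy₀ : E.rightDeg y₀ < m)
    (hclosed : ∀ y ∈ Z, ∀ y', CanShift G E y y' → y' ∈ Z)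
    (hnofree : ∀ y ∈ Z, ¬HasFreeSymbol G a E y) :
    ∃ K : Finset α, ∑ y, min m #(K.filter (G · y)) < ∑ x ∈ K, a x := by
  set Y := univ.filter fun x => ∃ y ∈ Z, G x y ∧ (x, y) ∉ E
  refine ⟨Yᶜ, ?_⟩
  have hsat : ∀ x ∈ Y, E.leftDeg x = a x := by
    intro x hx
    obtain ⟨y, hyZ, hG, hxy⟩ := (mem_filter.1 hx).2
    exact le_antisymm (hE.2.1 x) (not_lt.1 fun h => hnofree y hyZ ⟨x, hG, hxy, h⟩)
  have hYZ : ∀ p ∈ E, p.1 ∈ Y → p.2 ∈ Z := by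
    intro p hp hpY
    obtain ⟨y, hyZ, hG, hxy⟩ := (mem_filter.1 hpY).2
    exact hclosed y hyZ p.2 ⟨p.1, hG, hxy, hp⟩
  set g : β → ℕ := fun y => #((E.filter (·.1 ∈ Y)).filter (·.2 = y))
  have hcol : ∀ y, min m #(Yᶜ.filter (G · y)) + g y ≤ if y ∈ Z then E.rightDeg y else m := by
    intro y
    split_ifs with hy
    · have := card_compl_filter_add_card_le_rightDeg (G := G) (E := E) (Y := Y) (y := y)
        fun x hxY hG => by
          by_contra hxy
          exact hxY (mem_filter.2 ⟨mem_univ x, y, hy, hG, hxy⟩)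
      have := min_le_right m #(Yᶜ.filter (G · y))
      simp only [g]
      omega
    · have hg : g y = 0 := card_eq_zero.2 <| filter_eq_empty_iff.2 fun p hp hpy =>
        hy (hpy ▸ hYZ p (mem_filter.1 hp).1 (mem_filter.1 hp).2)
      rw [hg]
      exact min_le_left _ _
  have hsumg : ∑ y, g y = ∑ x ∈ Y, a x := by
    rw [← card_eq_sum_card_fiberwise fun p _ => mem_univ p.2,
      card_eq_sum_card_fiberwise (s := E.filter (·.1 ∈ Y)) (f := Prod.fst) (t := Y)
        fun p hp => (mem_filter.1 hp).2]
    refine sum_congr rfl fun x hx => ?_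
    rw [← hsat x hx, leftDeg, filter_filter]
    exact congrArg card (filter_congr fun p _ => ⟨And.right, fun h => ⟨h ▸ hx, h⟩⟩)
  have hlt : ∑ y, (min m #(Yᶜ.filter (G · y)) + g y) < ∑ _y : β, m := by
    refine sum_lt_sum (fun y _ => (hcol y).trans ?_) ⟨y₀, mem_univ _, ?_⟩
    · split_ifs
      exacts [hE.2.2 y, le_rfl]
    · exact (hcol y₀).trans_lt (by rwa [if_pos hy₀Z])
  have htotal := sum_compl_add_sum Y a
  rw [sum_add_distrib, hsumg, sum_const, card_univ, smul_eq_mul] at hlt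
  omega

/-- A Gale–Ryser-type selection theorem (max-flow min-cut for the network
source → symbols → columns → sink with capacities `a x`, `1` on each allowed pair, `m`). -/
theorem exists_selection [Fintype α] [Fintype β] [DecidableRel G]
    (hsum : ∑ x, a x = Fintype.card β * m)
    (hcut : ∀ K : Finset α, ∑ x ∈ K, a x ≤ ∑ y, min m #(K.filter (G · y))) :
    ∃ E : Finset (α × β), (∀ p ∈ E, G p.1 p.2) ∧ (∀ x, E.leftDeg x = a x) ∧
      ∀ y, E.rightDeg y = m := by
  classical
  obtain ⟨E, hE, hmax⟩ : ∃ E, IsPartialSelection G a m E ∧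
      ∀ E', IsPartialSelection G a m E' → #E' ≤ #E := by
    obtain ⟨E, hE, hmax⟩ := exists_max_image (univ.filter (IsPartialSelection G a m)) card
      ⟨∅, by simp [IsPartialSelection, leftDeg, rightDeg]⟩
    exact ⟨E, (mem_filter.1 hE).2, fun E' hE' => hmax E' (mem_filter.2 ⟨mem_univ _, hE'⟩)⟩
  have hfull : ∀ y, E.rightDeg y = m := by
    by_contra! ⟨y₀, hy₀⟩
    replace hy₀ : E.rightDeg y₀ < m := (hE.2.2 y₀).lt_of_ne hy₀
    have hnofree : ∀ y ∈ univ.filter (ReflTransGen (CanShift G E) y₀),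
        ¬HasFreeSymbol G a E y := fun y hy hfree => by
      obtain ⟨E', hE', hcard⟩ := hE.exists_card_succ_of_reachable univ hy₀
        ((mem_filter.1 hy).2.lift id fun _ _ h => ⟨h, mem_univ _⟩) hfree
      have := hmax E' hE'
      omega
    obtain ⟨K, hK⟩ := hE.exists_cut_lt hsum (mem_filter.2 ⟨mem_univ _, .refl⟩) hy₀
      (fun y hy y' h => mem_filter.2 ⟨mem_univ _, (mem_filter.1 hy).2.tail h⟩) hnofree
    exact (hcut K).not_gt hK
  have hcard : ∑ x, E.leftDeg x = ∑ x, a x := by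
    rw [sum_leftDeg, ← sum_rightDeg, hsum]
    simp [hfull]
  have hleft := (sum_eq_sum_iff_of_le fun x _ => hE.2.1 x).1 hcard
  exact ⟨E, hE.1, fun x => hleft x (mem_univ x), hfull⟩

end Selection

section Decomposition

variable {ι κ : Type*} [Fintype ι] [Fintype κ]

theorem exists_injective_of_line_sums [DecidableEq κ] (A : ι → κ → ℕ) {c : ℕ} (hc : 0 < c)
    (hrow : ∀ i, ∑ j, A i j = c) (hcol : ∀ j, ∑ i, A i j ≤ c) :
    ∃ f : ι → κ, Function.Injective f ∧ ∀ i, A i (f i) ≠ 0 := by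
  obtain ⟨f, hf, hmem⟩ := (all_card_le_biUnion_card_iff_exists_injective
    fun i => univ.filter fun j => A i j ≠ 0).1 fun S => by
      set N := S.biUnion fun i => univ.filter fun j => A i j ≠ 0
      refine Nat.le_of_mul_le_mul_right ?_ hc
      calc #S * c = ∑ i ∈ S, ∑ j, A i j := by simp [hrow]
        _ = ∑ i ∈ S, ∑ j ∈ N, A i j := sum_congr rfl fun i hi =>
            (sum_subset (subset_univ N) fun j _ hj => not_not.1 fun h =>
              hj (mem_biUnion.2 ⟨i, hi, mem_filter.2 ⟨mem_univ j, h⟩⟩)).symm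
        _ = ∑ j ∈ N, ∑ i ∈ S, A i j := sum_comm
        _ ≤ ∑ j ∈ N, ∑ i, A i j := sum_le_sum fun j _ => sum_le_sum_of_subset (subset_univ S)
        _ ≤ #N * c := by simpa using sum_le_card_nsmul N _ c fun j _ => hcol j
  exact ⟨f, hf, fun i => (mem_filter.1 (hmem i)).2⟩

theorem exists_equivs_of_line_sums_eq [DecidableEq ι] [DecidableEq κ] :
    ∀ (m : ℕ) (A : ι → κ → ℕ), (∀ i, ∑ j, A i j = m) → (∀ j, ∑ i, A i j = m) →
      ∃ σ : Fin m → ι ≃ κ, ∀ i j, #(univ.filter fun t => σ t i = j) = A i j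
  | 0, A, hrow, _ => ⟨Fin.elim0, fun i j => by
      simpa using ((sum_eq_zero_iff.1 (hrow i)) j (mem_univ j)).symm⟩
  | m + 1, A, hrow, hcol => by
    obtain ⟨f, hf, hfA⟩ := exists_injective_of_line_sums A m.succ_pos hrow fun j => (hcol j).le
    have hcard : Fintype.card ι = Fintype.card κ := by
      have h := Finset.sum_comm (s := univ) (t := univ) (f := A)
      simp only [hrow, hcol, sum_const, card_univ, smul_eq_mul] at h
      exact Nat.eq_of_mul_eq_mul_right m.succ_pos h
    let π : ι ≃ κ :=
      Equiv.ofBijective f ((Fintype.bijective_iff_injective_and_card f).2 ⟨hf, hcard⟩)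
    have hA : ∀ i j, (A i j - if π i = j then 1 else 0) + (if π i = j then 1 else 0) = A i j :=
      fun i j => Nat.sub_add_cancel <| by
        split_ifs with h
        · exact Nat.one_le_iff_ne_zero.2 (h ▸ hfA i)
        · exact Nat.zero_le _
    obtain ⟨σ, hσ⟩ := exists_equivs_of_line_sums_eq m (fun i j => A i j - if π i = j then 1 else 0)
      (fun i => by
        have h := hrow i
        rw [← sum_congr rfl fun j _ => hA i j, sum_add_distrib, sum_ite_eq] at h
        simpa using h)
      (fun j => by
        have h := hcol j
        rw [← sum_congr rfl fun i _ => hA i j, sum_add_distrib] at h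
        simpa [← Equiv.eq_symm_apply] using h)
    refine ⟨Fin.cons π σ, fun i j => ?_⟩
    rw [← hA i j, ← hσ i j, card_filter, card_filter, Fin.sum_univ_succ]
    simp [add_comm]

/-- The block matrix `[[A, diag (m - row sums)], [diag (m - column sums), Aᵀ]]`; all its line
sums are `m` once those of `A` are at most `m`. -/
def regularPad [DecidableEq ι] [DecidableEq κ] (A : ι → κ → ℕ) (m : ℕ) : ι ⊕ κ → κ ⊕ ι → ℕ
  | .inl i, .inl j => A i j
  | .inl i, .inr i' => if i = i' then m - ∑ j, A i j else 0
  | .inr j', .inl j => if j' = j then m - ∑ i, A i j else 0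
  | .inr j, .inr i => A i j

theorem exists_equivs_of_line_sums_le [DecidableEq ι] [DecidableEq κ] (A : ι → κ → ℕ) (m : ℕ)
    (hrow : ∀ i, ∑ j, A i j ≤ m) (hcol : ∀ j, ∑ i, A i j ≤ m) :
    ∃ σ : Fin m → ι ⊕ κ ≃ κ ⊕ ι, ∀ i j, #(univ.filter fun t => σ t (.inl i) = .inl j) = A i j := by
  obtain ⟨σ, hσ⟩ := exists_equivs_of_line_sums_eq m (regularPad A m)
    (fun
      | .inl i => by have := hrow i; simp [regularPad, Fintype.sum_sum_type]; omega
      | .inr j => by have := hcol j; simp [regularPad, Fintype.sum_sum_type]; omega)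
    (fun
      | .inl j => by have := hcol j; simp [regularPad, Fintype.sum_sum_type]; omega
      | .inr i => by have := hrow i; simp [regularPad, Fintype.sum_sum_type]; omega)
  exact ⟨σ, fun i j => hσ _ _⟩

end Decomposition

section LatinArrays

variable {r s m k : ℕ}

theorem symCount_eq_sum_rows (L : Fin r → Fin s → Fin k) (ℓ : Fin k) :
    symCount L ℓ = ∑ i, #(univ.filter fun j => L i j = ℓ) := by
  simp only [symCount, card_filter, Fintype.sum_prod_type]

theorem symCount_eq_sum_cols (L : Fin r → Fin s → Fin k) (ℓ : Fin k) :
    symCount L ℓ = ∑ j, #(univ.filter fun i => L i j = ℓ) := by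
  simp only [symCount, card_filter, Fintype.sum_prod_type_right]

theorem sum_symCount (L : Fin r → Fin s → Fin k) : ∑ ℓ, symCount L ℓ = r * s := by
  simp only [symCount]
  rw [← card_eq_sum_card_fiberwise fun p _ => mem_univ (L p.1 p.2)]
  simp

theorem symCount_le_of_injective {L : Fin r → Fin s → Fin k} (hL : ∀ i, Function.Injective (L i))
    (ℓ : Fin k) : symCount L ℓ ≤ r := by
  rw [symCount_eq_sum_rows]
  simpa using sum_le_card_nsmul univ _ 1 fun i _ =>
    card_le_one.2 fun j hj j' hj' => hL i ((mem_filter.1 hj).2.trans (mem_filter.1 hj').2.symm)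

theorem sum_symCount_eq_sum_card (B : Fin m → Fin s → Fin k) (K : Finset (Fin k)) :
    ∑ ℓ ∈ K, symCount B ℓ = ∑ j, #(univ.filter fun t => B t j ∈ K) := by
  simp only [symCount_eq_sum_cols]
  rw [sum_comm]
  refine sum_congr rfl fun j _ => ?_
  rw [card_eq_sum_card_fiberwise (s := univ.filter fun t => B t j ∈ K) (t := K)
    fun t ht => (mem_filter.1 ht).2]
  refine sum_congr rfl fun ℓ hℓ => congrArg card ?_
  ext t
  simp only [mem_filter, mem_univ, true_and]
  exact ⟨fun h => ⟨h ▸ hℓ, h⟩, And.right⟩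

theorem symCount_append (L : Fin r → Fin s → Fin k) (B : Fin m → Fin s → Fin k) (ℓ : Fin k) :
    symCount (Fin.append L B) ℓ = symCount L ℓ + symCount B ℓ := by
  simp only [symCount_eq_sum_rows, Fin.sum_univ_add, Fin.append_left, Fin.append_right]

theorem latinArr_append_iff {L : Fin r → Fin s → Fin k} {B : Fin m → Fin s → Fin k} :
    latinArr (Fin.append L B) ↔ latinArr L ∧ latinArr B ∧ ∀ t i j, B t j ≠ L i j := by
  have hcol : ∀ j, (fun i => Fin.append L B i j) = Fin.append (L · j) (B · j) := fun j => by
    ext i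
    refine Fin.addCases (fun i => ?_) (fun t => ?_) i <;> simp
  simp only [latinArr, Fin.forall_fin_add, Fin.append_left, Fin.append_right, hcol,
    Fin.append_injective_iff, forall_and]
  constructor
  · rintro ⟨⟨hLr, hBr⟩, hLc, hBc, hLB⟩
    exact ⟨⟨hLr, hLc⟩, ⟨hBr, hBc⟩, fun t i j => (hLB j i t).symm⟩
  · rintro ⟨⟨hLr, hLc⟩, ⟨hBr, hBc⟩, hLB⟩
    exact ⟨⟨hLr, hBr⟩, hLc, hBc, fun j i t => (hLB t i j).symm⟩

theorem exists_latinArr_of_rightDeg_eq (E : Finset (Fin k × Fin s))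
    (hright : ∀ j, E.rightDeg j = m) (hleft : ∀ ℓ, E.leftDeg ℓ ≤ m) :
    ∃ B : Fin m → Fin s → Fin k, latinArr B ∧ (∀ t j, (B t j, j) ∈ E) ∧
      ∀ ℓ, symCount B ℓ = E.leftDeg ℓ := by
  set A : Fin s → Fin k → ℕ := fun j ℓ => if (ℓ, j) ∈ E then 1 else 0
  have hrow : ∀ j, ∑ ℓ, A j ℓ = m := fun j => by rw [← rightDeg_eq_sum, hright]
  have hcol : ∀ ℓ, ∑ j, A j ℓ = E.leftDeg ℓ := fun ℓ => (leftDeg_eq_sum E ℓ).symm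
  obtain ⟨σ, hσ⟩ := exists_equivs_of_line_sums_le A m (fun j => (hrow j).le)
    fun ℓ => (hcol ℓ).trans_le (hleft ℓ)
  have hinl : ∀ t j, ∃ ℓ, σ t (.inl j) = .inl ℓ := by
    intro t j
    have htot := card_eq_sum_card_fiberwise (s := univ) (t := univ)
      (f := fun t => σ t (.inl j)) fun _ _ => mem_univ _
    rw [Fintype.sum_sum_type, card_univ, Fintype.card_fin] at htot
    simp only [hσ, hrow, left_eq_add, sum_eq_zero_iff, mem_univ, true_implies, card_eq_zero,
      filter_eq_empty_iff] at htot
    cases h : σ t (.inl j) with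
    | inl ℓ => exact ⟨ℓ, rfl⟩
    | inr i => exact (htot i h).elim
  choose B hB using hinl
  have hfiber : ∀ j ℓ,
      (univ.filter fun t => B t j = ℓ) = univ.filter fun t => σ t (.inl j) = .inl ℓ :=
    fun j ℓ => filter_congr fun t _ => by rw [hB, Sum.inl.injEq]
  refine ⟨B, ⟨fun t j j' h => ?_, fun j t t' h => ?_⟩, fun t j => ?_, fun ℓ => ?_⟩
  · exact Sum.inl_injective <|
      (σ t).injective ((hB t j).trans ((congrArg Sum.inl h).trans (hB t j').symm))
  · have hle : #(univ.filter fun t'' => B t'' j = B t' j) ≤ 1 := by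
      rw [hfiber, hσ]
      simp only [A]
      split_ifs <;> simp
    exact card_le_one.1 hle t (by simpa using h) t' (by simp)
  · by_contra hE
    have h0 : #(univ.filter fun t' => B t' j = B t j) = 0 := by rw [hfiber, hσ]; simp [A, hE]
    exact notMem_empty t (card_eq_zero.1 h0 ▸ mem_filter.2 ⟨mem_univ t, rfl⟩)
  · rw [symCount_eq_sum_cols, ← hcol]
    exact sum_congr rfl fun j _ => by rw [hfiber, hσ]

end LatinArrays

section Completion

variable {r m k : ℕ}

/-- A completion of `L` is `Fin.append L B` for its bottom block `B`. -/
theorem exists_completion_iff_exists_bottom (hr : r ≤ r + m) {ρ : Fin k → ℕ}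
    {L : Fin r → Fin (r + m) → Fin k} (hL : latinArr L) :
    (∃ S, rhoLatinSquare ρ S ∧ extends' hr le_rfl L S) ↔
      ∃ B : Fin m → Fin (r + m) → Fin k, latinArr B ∧ (∀ t i j, B t j ≠ L i j) ∧
        ∀ ℓ, symCount L ℓ + symCount B ℓ = ρ ℓ := by
  constructor
  · rintro ⟨S, ⟨hS, hcount⟩, hext⟩
    obtain ⟨B, rfl⟩ : ∃ B, S = Fin.append L B := by
      refine ⟨fun t => S (Fin.natAdd r t), funext fun i => ?_⟩
      refine Fin.addCases (fun i => funext fun j => ?_) (fun t => ?_) i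
      · rw [Fin.append_left]
        exact hext i j
      · rw [Fin.append_right]
    rw [latinArr_append_iff] at hS
    exact ⟨B, hS.2.1, hS.2.2, fun ℓ => by rw [← hcount, symCount_append]⟩
  · rintro ⟨B, hB, hBL, hcount⟩
    refine ⟨Fin.append L B, ⟨latinArr_append_iff.2 ⟨hL, hB, hBL⟩, fun ℓ => ?_⟩, fun i j => ?_⟩
    · rw [symCount_append, hcount]
    · simp

theorem completion_conditions_of_bottom {s : ℕ} {L : Fin r → Fin s → Fin k}
    {B : Fin m → Fin s → Fin k} (hB : latinArr B) (hBL : ∀ t i j, B t j ≠ L i j) :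
    (∀ ℓ, symCount B ℓ ≤ m) ∧
      ∀ K : Finset (Fin k), ∑ ℓ ∈ K, symCount B ℓ ≤ ∑ j, min m (muSymCol L K j) := by
  refine ⟨symCount_le_of_injective hB.1, fun K => ?_⟩
  rw [sum_symCount_eq_sum_card]
  refine sum_le_sum fun j _ => le_min ((card_filter_le _ _).trans (by simp)) ?_
  refine card_le_card_of_injOn (B · j) (fun t ht => ?_) fun t _ t' _ h => hB.2 j h
  exact mem_filter.2 ⟨(mem_filter.1 ht).2, fun i h => hBL t i j h.symm⟩

theorem exists_bottom_of_completion_conditions {ρ : Fin k → ℕ} (hsum : ∑ ℓ, ρ ℓ = (r + m) ^ 2)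
    {L : Fin r → Fin (r + m) → Fin k} (he : ∀ ℓ, symCount L ℓ ≤ ρ ℓ)
    (hmax : ∀ ℓ, ρ ℓ - symCount L ℓ ≤ m)
    (hcut : ∀ K : Finset (Fin k),
      ∑ ℓ ∈ K, (ρ ℓ - symCount L ℓ) ≤ ∑ j, min m (muSymCol L K j)) :
    ∃ B : Fin m → Fin (r + m) → Fin k, latinArr B ∧ (∀ t i j, B t j ≠ L i j) ∧
      ∀ ℓ, symCount L ℓ + symCount B ℓ = ρ ℓ := by
  have htotal : ∑ ℓ, (ρ ℓ - symCount L ℓ) = Fintype.card (Fin (r + m)) * m := by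
    have h := sum_symCount L
    rw [← sum_congr rfl fun ℓ _ => Nat.sub_add_cancel (he ℓ), sum_add_distrib, h] at hsum
    rw [Fintype.card_fin]
    linarith
  obtain ⟨E, hEL, hleft, hright⟩ := exists_selection (G := fun ℓ j => ∀ i, L i j ≠ ℓ) htotal hcut
  obtain ⟨B, hB, hBE, hcount⟩ :=
    exists_latinArr_of_rightDeg_eq E hright fun ℓ => (hleft ℓ).trans_le (hmax ℓ)
  refine ⟨B, hB, fun t i j h => hEL _ (hBE t j) i h.symm, fun ℓ => ?_⟩
  rw [hcount, hleft]
  exact Nat.add_sub_cancel' (he ℓ)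

end Completion

theorem stmt5_general (n k r : ℕ) (hrn : r < n)
    (ρ : Fin k → ℕ)
    (hsum : ∑ ℓ, ρ ℓ = n ^ 2)
    (L : Fin r → Fin n → Fin k) (hL : latinArr L)
    (he : ∀ ℓ, symCount L ℓ ≤ ρ ℓ) :
    (∃ S : Fin n → Fin n → Fin k, rhoLatinSquare ρ S ∧ extends' hrn.le le_rfl L S) ↔
      ((∀ ℓ, ρ ℓ - symCount L ℓ ≤ n - r) ∧
        ∀ K : Finset (Fin k),
          ∑ ℓ ∈ K, (ρ ℓ - symCount L ℓ) ≤ ∑ j : Fin n, min (n - r) (muSymCol L K j)) := by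
  obtain ⟨m, rfl⟩ : ∃ m, n = r + m := ⟨n - r, by omega⟩
  rw [exists_completion_iff_exists_bottom hrn.le hL, Nat.add_sub_cancel_left]
  constructor
  · rintro ⟨B, hB, hBL, hcount⟩
    have hdiff : ∀ ℓ, ρ ℓ - symCount L ℓ = symCount B ℓ := fun ℓ => by
      have := hcount ℓ
      omega
    simpa only [hdiff] using completion_conditions_of_bottom hB hBL
  · rintro ⟨hmax, hcut⟩
    exact exists_bottom_of_completion_conditions hsum he hmax hcut

/-- Hall-type completion, symbol-set form: an `r × n` `ρ`-latin rectangle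
completes to an `n × n` `ρ`-latin square iff `ρ_ℓ - e_ℓ ≤ n - r` for all `ℓ`
and `∑_{ℓ∈K}(ρ_ℓ - e_ℓ) ≤ ∑_j min{n-r, μ_K(j)}` for all symbol sets `K`. -/
theorem stmt5 (n k r : ℕ) (hr : 1 ≤ r) (hrn : r < n) (hnk : n ≤ k)
    (ρ : Fin k → ℕ) (hρ1 : ∀ ℓ, 1 ≤ ρ ℓ) (hρn : ∀ ℓ, ρ ℓ ≤ n)
    (hsum : ∑ ℓ, ρ ℓ = n ^ 2)
    (L : Fin r → Fin n → Fin k) (hL : latinArr L)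
    (he : ∀ ℓ, symCount L ℓ ≤ ρ ℓ) :
    (∃ S : Fin n → Fin n → Fin k, rhoLatinSquare ρ S ∧ extends' hrn.le le_rfl L S) ↔
      ((∀ ℓ, ρ ℓ - symCount L ℓ ≤ n - r) ∧
        ∀ K : Finset (Fin k),
          ∑ ℓ ∈ K, (ρ ℓ - symCount L ℓ) ≤ ∑ j : Fin n, min (n - r) (muSymCol L K j)) :=
  stmt5_general n k r hrn ρ hsum L hL he
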